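/- arXiv:1806.00960 — 8 statements merged into one kernel-verified Lean document; each statement's English description precedes it below -/
import Mathlib

section
/- For any profile of agent locations x in [0,1]^n, any facility location s in [0,1], and any capacity k ≤ n, in every ex-post Nash equilibrium of the induced subgame the k agents closest to s (under the distance-based priority with deterministic tie-breaking) are served and attain utility 1 - |s - x_i|, while all other agents attain utility 0; moreover, such an equilibrium always exists. -/
open scoped Classical
open unitInterval

noncomputable section

/-- Distance-based priority: agent `i` has strictly higher priority than `j` for the
facility at `s` if `i` is strictly closer, or equidistant with a smaller index
(deterministic tie-breaking). -/
def prio {n : ℕ} (x : Fin n → I) (s : I) (i j : Fin n) : Prop :=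
  |(s : ℝ) - x i| < |(s : ℝ) - x j| ∨ (|(s : ℝ) - x i| = |(s : ℝ) - x j| ∧ i < j)

/-- Agent `i` is among the `k` closest agents to `s` (the set `N_k^*(x,s)`). -/
def served {n : ℕ} (x : Fin n → I) (s : I) (k : ℕ) (i : Fin n) : Prop :=
  ({j : Fin n | prio x s j i}).ncard < k

/-- Ex-post equilibrium utility `u_i^*(s, x, k)`. -/
def util {n : ℕ} (x : Fin n → I) (s : I) (k : ℕ) (i : Fin n) : ℝ :=
  if served x s k i then 1 - |(s : ℝ) - x i| else 0

/-- Ex-post dominant-strategy incentive compatibility for capacity `k`. -/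
def DIC (n k : ℕ) (M : (Fin n → I) → I) : Prop :=
  ∀ (i : Fin n) (x y : Fin n → I) (x' : I),
    util x (M (Function.update y i x')) k i ≤ util x (M (Function.update y i (x i))) k i

/-- The uncompromising property of a mechanism. -/
def Uncompromising {n : ℕ} (M : (Fin n → I) → I) : Prop :=
  ∀ (x : Fin n → I) (i : Fin n),
    ((M x : ℝ) < x i → ∀ x' : I, (M x : ℝ) ≤ x' → M (Function.update x i x') = M x) ∧
    ((x i : ℝ) < M x → ∀ x' : I, (x' : ℝ) ≤ M x → M (Function.update x i x') = M x)

/-- Generalized median mechanisms: `M(x) = min_S max(max_{i ∈ S} x_i, a_S)`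
(the max over the empty set being `0 = ⊥`). -/
def IsGMM {n : ℕ} (M : (Fin n → I) → I) : Prop :=
  ∃ a : Finset (Fin n) → I,
    ∀ x, M x = Finset.univ.inf fun S : Finset (Fin n) => max (S.sup x) (a S)

/-- Social welfare of facility location `s`. -/
def welfare {n : ℕ} (x : Fin n → I) (k : ℕ) (s : I) : ℝ :=
  ∑ i, util x s k i

/-- Optimal social welfare `Π^*(x,k)`. -/
def optWelfare {n : ℕ} (x : Fin n → I) (k : ℕ) : ℝ :=
  ⨆ s : I, welfare x k s

/-- The median mechanism: outputs the `⌊(n+1)/2⌋`-th smallest reported location. -/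
def medianMech (n : ℕ) (x : Fin n → I) : I :=
  ((Finset.univ.val.map x).sort (· ≤ ·)).getD ((n + 1) / 2 - 1) 0

/-- In the subgame, agent `i` who travels is served if fewer than `k` travelers have
strictly higher priority. -/
def gameServed {n : ℕ} (x : Fin n → I) (s : I) (k : ℕ) (a : Fin n → Bool) (i : Fin n) : Prop :=
  a i = true ∧ ({j : Fin n | a j = true ∧ prio x s j i}).ncard < k

/-- Payoff in the subgame `Γ_x(s,k)`: a served traveler gets `1 - d`, an unserved
traveler gets `-d`, and a non-traveler gets `0`. -/
def payoff {n : ℕ} (x : Fin n → I) (s : I) (k : ℕ) (a : Fin n → Bool) (i : Fin n) : ℝ :=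
  if a i = true then
    (if gameServed x s k a i then 1 - |(s : ℝ) - x i| else -|(s : ℝ) - x i|)
  else 0

/-- (Ex-post) Nash equilibrium of the subgame: no agent gains by unilateral deviation. -/
def NashEq {n : ℕ} (x : Fin n → I) (s : I) (k : ℕ) (a : Fin n → Bool) : Prop :=
  ∀ (i : Fin n) (b : Bool), payoff x s k (Function.update a i b) i ≤ payoff x s k a i


/-! Rank the agents by priority. Letting exactly the `k` best-ranked agents travel is an
equilibrium: each of them is served and gets `1 - d ≥ 0`, while an outsider who travels finds
`k` travelers ahead of it and gets `-d ≤ 0`. Conversely, in an equilibrium a top-`k` agent who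
stays home could be served by traveling, so it must be at distance `1`; an outsider who travels
unserved must be at distance `0`; and an outsider who travels and is served has fewer than `k`
travelers ahead, so some top-`k` agent, at distance no larger than its own, stays home, which
puts both at distance `1`. In every case the payoff is `util`. -/

section StrictRank

variable {α : Type*} [Finite α]

def strictRank (r : α → α → Prop) (a : α) : ℕ :=
  {b | r b a}.ncard

variable {r : α → α → Prop} [IsStrictTotalOrder α r]

theorem strictRank_lt_strictRank_of_rel {a b : α} (h : r b a) :
    strictRank r b < strictRank r a :=
  Set.ncard_lt_ncard ⟨fun _ hc => _root_.trans hc h, fun hsub => irrefl b (hsub h)⟩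

theorem strictRank_lt_strictRank_iff {a b : α} : strictRank r b < strictRank r a ↔ r b a := by
  refine ⟨fun h => ?_, strictRank_lt_strictRank_of_rel⟩
  rcases trichotomous_of r b a with hba | rfl | hab
  · exact hba
  · exact absurd h (lt_irrefl _)
  · exact absurd h (strictRank_lt_strictRank_of_rel hab).asymm

theorem strictRank_injective : Function.Injective (strictRank r) := fun a b h => by
  rcases trichotomous_of r a b with hab | rfl | hba
  · exact absurd h (strictRank_lt_strictRank_of_rel hab).ne
  · rfl
  · exact absurd h (strictRank_lt_strictRank_of_rel hba).ne'

theorem strictRank_lt_card (a : α) : strictRank r a < Nat.card α :=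
  Set.ncard_univ α ▸ Set.ncard_lt_ncard ⟨Set.subset_univ _, fun h => irrefl a (h trivial)⟩

theorem range_strictRank : Set.range (strictRank r) = Set.Iio (Nat.card α) := by
  refine Set.eq_of_subset_of_ncard_le ?_ ?_ (Set.finite_Iio (Nat.card α))
  · rintro _ ⟨a, rfl⟩
    exact strictRank_lt_card a
  · rw [Set.ncard_range_of_injective strictRank_injective, Set.ncard_Iio_nat]

theorem ncard_setOf_strictRank_lt {k : ℕ} (hk : k ≤ Nat.card α) :
    {a | strictRank r a < k}.ncard = k := by
  change (strictRank r ⁻¹' Set.Iio k).ncard = k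
  rw [Set.ncard_preimage_of_injective_subset_range strictRank_injective, Set.ncard_Iio_nat]
  exact range_strictRank (r := r) ▸ Set.Iio_subset_Iio hk

end StrictRank

section Subgame

variable {n : ℕ} {x : Fin n → I} {s : I} {k : ℕ} {a : Fin n → Bool} {i j : Fin n}

instance prio.isStrictTotalOrder (x : Fin n → I) (s : I) :
    IsStrictTotalOrder (Fin n) (prio x s) where
  irrefl i := by simp [prio]
  trans i j m := by
    rintro (hij | ⟨hij, hij'⟩) (hjm | ⟨hjm, hjm'⟩)
    · exact .inl (hij.trans hjm)
    · exact .inl (hij.trans_eq hjm)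
    · exact .inl (hij.trans_lt hjm)
    · exact .inr ⟨hij.trans hjm, hij'.trans hjm'⟩
  trichotomous i j hij hji := by
    simp only [prio, not_or, not_and, not_lt] at hij hji
    have h : |(s : ℝ) - x i| = |(s : ℝ) - x j| := le_antisymm hji.1 hij.1
    exact le_antisymm (hji.2 h.symm) (hij.2 h)

theorem served_iff_strictRank_lt : served x s k i ↔ strictRank (prio x s) i < k :=
  Iff.rfl

theorem abs_sub_le_of_prio (h : prio x s j i) : |(s : ℝ) - x j| ≤ |(s : ℝ) - x i| :=
  h.elim le_of_lt fun h => h.1.le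

theorem prio_of_served_of_not_served (hj : served x s k j) (hi : ¬served x s k i) :
    prio x s j i :=
  strictRank_lt_strictRank_iff.1 <|
    (served_iff_strictRank_lt.1 hj).trans_le (not_lt.1 (served_iff_strictRank_lt.not.1 hi))

theorem ncard_served_of_not_served (hi : ¬served x s k i) : {j | served x s k j}.ncard = k :=
  ncard_setOf_strictRank_lt <|
    (not_lt.1 (served_iff_strictRank_lt.not.1 hi)).trans (strictRank_lt_card i).le

theorem abs_sub_le_one (s t : I) : |(s : ℝ) - t| ≤ 1 :=
  abs_sub_le_iff.2 ⟨by linarith [s.2.2, t.2.1], by linarith [s.2.1, t.2.2]⟩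

theorem payoff_of_eq_false (h : a i = false) : payoff x s k a i = 0 := by
  simp [payoff, h]

theorem payoff_of_gameServed (h : gameServed x s k a i) :
    payoff x s k a i = 1 - |(s : ℝ) - x i| := by
  rw [payoff, if_pos h.1, if_pos h]

theorem payoff_of_not_gameServed (ha : a i = true) (h : ¬gameServed x s k a i) :
    payoff x s k a i = -|(s : ℝ) - x i| := by
  rw [payoff, if_pos ha, if_neg h]

theorem gameServed_of_served (ha : a i = true) (hi : served x s k i) : gameServed x s k a i :=
  ⟨ha, (Set.ncard_le_ncard fun _ hj => hj.2).trans_lt hi⟩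

theorem gameServed_update_self_iff :
    gameServed x s k (Function.update a i true) i ↔
      {j | a j = true ∧ prio x s j i}.ncard < k := by
  have : {j | Function.update a i true j = true ∧ prio x s j i} =
      {j | a j = true ∧ prio x s j i} := by
    ext j
    refine and_congr_left fun hj => ?_
    rw [Function.update_of_ne (ne_of_irrefl hj)]
  simp [gameServed, this]

theorem le_ncard_travelers_of_not_served (hi : ¬served x s k i)
    (ha : ∀ j, served x s k j → a j = true) : k ≤ {j | a j = true ∧ prio x s j i}.ncard :=
  ncard_served_of_not_served hi ▸
    Set.ncard_le_ncard fun j hj => ⟨ha j hj, prio_of_served_of_not_served hj hi⟩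

end Subgame

namespace NashEq

variable {n : ℕ} {x : Fin n → I} {s : I} {k : ℕ} {a : Fin n → Bool} {i : Fin n}

theorem abs_sub_eq_one_of_stays_home (h : NashEq x s k a) (ha : a i = false)
    (hi : gameServed x s k (Function.update a i true) i) : |(s : ℝ) - x i| = 1 := by
  have hdev := h i true
  rw [payoff_of_gameServed hi, payoff_of_eq_false ha] at hdev
  linarith [abs_sub_le_one s (x i)]

theorem abs_sub_eq_zero_of_not_gameServed (h : NashEq x s k a) (ha : a i = true)
    (hi : ¬gameServed x s k a i) : |(s : ℝ) - x i| = 0 := by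
  have hdev := h i false
  rw [payoff_of_eq_false (Function.update_self i false a), payoff_of_not_gameServed ha hi] at hdev
  linarith [abs_nonneg ((s : ℝ) - x i)]

theorem payoff_eq_of_served (h : NashEq x s k a) (hi : served x s k i) :
    payoff x s k a i = 1 - |(s : ℝ) - x i| := by
  cases ha : a i
  · have hdev := gameServed_of_served (Function.update_self i true a) hi
    rw [payoff_of_eq_false ha, h.abs_sub_eq_one_of_stays_home ha hdev, sub_self]
  · exact payoff_of_gameServed (gameServed_of_served ha hi)

theorem payoff_eq_zero_of_not_served (h : NashEq x s k a) (hi : ¬served x s k i) :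
    payoff x s k a i = 0 := by
  cases ha : a i
  · exact payoff_of_eq_false ha
  by_cases hserv : gameServed x s k a i
  swap
  · rw [payoff_of_not_gameServed ha hserv, h.abs_sub_eq_zero_of_not_gameServed ha hserv, neg_zero]
  obtain ⟨j, hj, haj⟩ : ∃ j, served x s k j ∧ a j = false := by
    by_contra! hall
    exact (le_ncard_travelers_of_not_served hi fun j hj => by simpa using hall j hj).not_gt
      hserv.2
  have hji := prio_of_served_of_not_served hj hi
  have hjdev : gameServed x s k (Function.update a j true) j :=
    gameServed_update_self_iff.2 <| (Set.ncard_le_ncard (t := {m | a m = true ∧ prio x s m i})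
      fun m hm => ⟨hm.1, _root_.trans hm.2 hji⟩).trans_lt hserv.2
  have hdj := h.abs_sub_eq_one_of_stays_home haj hjdev
  have hdi : |(s : ℝ) - x i| = 1 :=
    le_antisymm (abs_sub_le_one s (x i)) (hdj ▸ abs_sub_le_of_prio hji)
  rw [payoff_of_gameServed hserv, hdi, sub_self]

end NashEq

theorem nashEq_served {n : ℕ} (x : Fin n → I) (s : I) (k : ℕ) :
    NashEq x s k fun i => decide (served x s k i) := by
  intro i b
  by_cases hb : b = decide (served x s k i)
  · rw [hb, Function.update_eq_self]
  by_cases hi : served x s k i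
  · obtain rfl : b = false := by simpa [hi] using hb
    rw [payoff_of_eq_false (by simp),
      payoff_of_gameServed (gameServed_of_served (by simpa using hi) hi)]
    linarith [abs_sub_le_one s (x i)]
  · obtain rfl : b = true := by simpa [hi] using hb
    have hdev : ¬gameServed x s k (Function.update (fun j => decide (served x s k j)) i true) i :=
      fun hserv => (le_ncard_travelers_of_not_served hi fun j hj => by simpa using hj).not_gt
        (gameServed_update_self_iff.1 hserv)
    rw [payoff_of_not_gameServed (by simp) hdev,
      payoff_of_eq_false (by simpa using hi)]
    linarith [abs_nonneg ((s : ℝ) - x i)]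

theorem subgame_equilibrium_exists_and_unique_utilities_general
    (n k : ℕ) (x : Fin n → I) (s : I) :
    (∃ a : Fin n → Bool, NashEq x s k a) ∧
    (∀ a : Fin n → Bool, NashEq x s k a → ∀ i : Fin n,
      payoff x s k a i = util x s k i) := by
  refine ⟨⟨_, nashEq_served x s k⟩, fun a ha i => ?_⟩
  by_cases hi : served x s k i
  · rw [util, if_pos hi, ha.payoff_eq_of_served hi]
  · rw [util, if_neg hi, ha.payoff_eq_zero_of_not_served hi]

theorem subgame_equilibrium_exists_and_unique_utilities
    (n k : ℕ) (hk : k ≤ n) (x : Fin n → I) (s : I) :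
    (∃ a : Fin n → Bool, NashEq x s k a) ∧
    (∀ a : Fin n → Bool, NashEq x s k a → ∀ i : Fin n,
      payoff x s k a i = util x s k i) :=
  subgame_equilibrium_exists_and_unique_utilities_general n k x s
end
end

section
/- The equilibrium utility u_i*(s, x, k) = (1 - |s - x_i|) if i is among the k closest agents to s, else 0, is weakly single-peaked in s: if s < s' ≤ x_i or x_i ≤ s' < s then u_i*(s, x, k) ≤ u_i*(s', x, k). -/
open scoped Classical
open unitInterval

noncomputable section

/-!
Moving the facility from `s` to a point `s'` between `s` and `x i` brings agent `i` closer by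
exactly `|s - s'|`, and no agent closer by more than that. Hence every agent ahead of `i` in the
priority at `s'` was already ahead at `s`, so `i` stays among the `k` closest, now at a smaller
distance.
-/

section Monotone

variable {n : ℕ} {x : Fin n → I} {s s' : I} {i : Fin n}

theorem prio_of_abs_sub_eq_add {j : Fin n}
    (hi : |(s : ℝ) - x i| = |(s : ℝ) - s'| + |(s' : ℝ) - x i|) (hj : prio x s' j i) :
    prio x s j i := by
  have tri : |(s : ℝ) - x j| ≤ |(s : ℝ) - s'| + |(s' : ℝ) - x j| := abs_sub_le _ _ _
  rcases hj with hlt | ⟨heq, hji⟩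
  · exact Or.inl (by linarith)
  · rcases (show |(s : ℝ) - x j| ≤ |(s : ℝ) - x i| by linarith).lt_or_eq with hlt | heq'
    · exact Or.inl hlt
    · exact Or.inr ⟨heq', hji⟩

theorem served_of_abs_sub_eq_add {k : ℕ}
    (hi : |(s : ℝ) - x i| = |(s : ℝ) - s'| + |(s' : ℝ) - x i|) (hs : served x s k i) :
    served x s' k i :=
  (Set.ncard_le_ncard fun _ hj => prio_of_abs_sub_eq_add hi hj).trans_lt hs

theorem util_le_util_of_abs_sub_eq_add {k : ℕ}
    (hi : |(s : ℝ) - x i| = |(s : ℝ) - s'| + |(s' : ℝ) - x i|) :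
    util x s k i ≤ util x s' k i := by
  have hdist : |(s' : ℝ) - x i| ≤ 1 :=
    abs_sub_le_of_le_of_le s'.2.1 s'.2.2 (x i).2.1 (x i).2.2 |>.trans_eq (sub_zero 1)
  unfold util
  split_ifs with hs hs'
  · linarith [abs_nonneg ((s : ℝ) - s')]
  · exact absurd (served_of_abs_sub_eq_add hi hs) hs'
  · linarith
  · exact le_rfl

end Monotone

theorem util_single_peaked_general (n k : ℕ) (x : Fin n → I) (i : Fin n)
    (s s' : I)
    (h : ((s : ℝ) < s' ∧ (s' : ℝ) ≤ x i) ∨ ((x i : ℝ) ≤ s' ∧ (s' : ℝ) < s)) :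
    util x s k i ≤ util x s' k i := by
  apply util_le_util_of_abs_sub_eq_add
  rw [show (s : ℝ) - x i = (s - s') + (s' - x i) by ring, abs_add_eq_add_abs_iff]
  rcases h with ⟨h₁, h₂⟩ | ⟨h₁, h₂⟩
  · exact Or.inr ⟨by linarith, by linarith⟩
  · exact Or.inl ⟨by linarith, by linarith⟩

theorem util_single_peaked (n k : ℕ) (hk : k ≤ n) (x : Fin n → I) (i : Fin n)
    (s s' : I)
    (h : ((s : ℝ) < s' ∧ (s' : ℝ) ≤ x i) ∨ ((x i : ℝ) ≤ s' ∧ (s' : ℝ) < s)) :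
    util x s k i ≤ util x s' k i :=
  util_single_peaked_general n k x i s s' h
end
end

section
/- If an agent i is among the k closest agents to a facility location s, and the facility moves to s' with s < s' ≤ x_i or x_i ≤ s' < s, then agent i remains among the k closest agents to s'. -/
open scoped Classical
open unitInterval

noncomputable section

/-! If `s'` lies between `s` and `x i`, every agent ranked above `i` at `s'` is also ranked
above `i` at `s`, since `|s - x j| ≤ |s - s'| + |s' - x j| ≤ |s - s'| + |s' - x i| = |s - x i|.
So the set of agents ahead of `i` can only shrink, and `i` stays served. -/

section Betweenness

variable {P : Type*} [PseudoMetricSpace P] {x y z w : P}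

theorem dist_le_of_dist_add_dist_eq (h : dist x y + dist y z = dist x z)
    (hw : dist y w ≤ dist y z) : dist x w ≤ dist x z := by
  linarith [dist_triangle x y w]

theorem dist_lt_of_dist_add_dist_eq (h : dist x y + dist y z = dist x z)
    (hw : dist y w < dist y z) : dist x w < dist x z := by
  linarith [dist_triangle x y w]

end Betweenness

theorem prio_of_mem_uIcc {n : ℕ} {x : Fin n → I} {s s' : I} {i j : Fin n}
    (hs' : (s' : ℝ) ∈ Set.uIcc (s : ℝ) (x i)) (hj : prio x s' j i) : prio x s j i := by
  have hbtw : dist (s : ℝ) s' + dist (s' : ℝ) (x i) = dist (s : ℝ) (x i) :=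
    dist_add_dist_of_mem_segment (by rwa [segment_eq_uIcc])
  simp only [prio, ← Real.dist_eq] at hj ⊢
  rcases hj with hlt | ⟨heq, hji⟩
  · exact Or.inl (dist_lt_of_dist_add_dist_eq hbtw hlt)
  · exact (dist_le_of_dist_add_dist_eq hbtw heq.le).lt_or_eq.imp_right (⟨·, hji⟩)

theorem served_of_mem_uIcc {n k : ℕ} {x : Fin n → I} {s s' : I} {i : Fin n}
    (hs' : (s' : ℝ) ∈ Set.uIcc (s : ℝ) (x i)) (hserved : served x s k i) :
    served x s' k i :=
  (Set.ncard_le_ncard (fun _ => prio_of_mem_uIcc hs') (Set.toFinite _)).trans_lt hserved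

theorem served_moves_toward_peak (n k : ℕ) (x : Fin n → I) (i : Fin n)
    (s s' : I)
    (h : ((s : ℝ) < s' ∧ (s' : ℝ) ≤ x i) ∨ ((x i : ℝ) ≤ s' ∧ (s' : ℝ) < s))
    (hserved : served x s k i) :
    served x s' k i :=
  served_of_mem_uIcc (Set.mem_uIcc.mpr (h.imp (And.imp_left le_of_lt) (And.imp_right le_of_lt)))
    hserved
end
end

section
/- A mechanism M : [0,1]^n → [0,1] is uncompromising if and only if it is a generalized median mechanism, i.e., there exist constants a_S ∈ [0,1] for each subset S of agents such that M(x) = min over subsets S of max( max_{i∈S} x_i, a_S ) for all profiles x (with max over the empty set taken as 0). -/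
open scoped Classical
open unitInterval

noncomputable section

/-! An uncompromising mechanism is monotone: in one coordinate because an agent on the far side
of the outcome can be moved back to it without effect, and in general by changing one coordinate
at a time. Agents strictly on one side of the outcome can all be moved anywhere on that side.
Moving those above `M x` to `1`, resp. those of a set `S` lying below `M x` to `0`, and comparing
by monotonicity with the profile that is `0` on `S` and `1` off `S` identifies `a_S` as the
outcome at that profile. Conversely, a term attaining the min–max never involves an agent
strictly above the outcome, and a term at least the outcome remains so when an agent moves on
its side. -/

open Function


theorem Pi.rel_of_forall_update {ι α : Type*} [Fintype ι] [DecidableEq ι]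
    {C : ι → α → α → Prop} {R : (ι → α) → (ι → α) → Prop}
    (hrefl : ∀ x, R x x) (htrans : ∀ x y z, R x y → R y z → R x z)
    (hstep : ∀ x i t, C i (x i) t → R x (update x i t))
    {x y : ι → α} (h : ∀ i, C i (x i) (y i)) : R x y := by
  suffices ∀ s : Finset ι, R x (s.piecewise y x) by simpa using this Finset.univ
  intro s
  induction s using Finset.induction_on with
  | empty => simpa using hrefl x
  | insert a s ha ih =>
    rw [Finset.piecewise_insert]
    refine htrans _ _ _ ih (hstep _ a _ ?_)
    rw [Finset.piecewise_eq_of_notMem _ _ _ ha]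
    exact h a

theorem monotone_of_eq_of_lt_of_eq_of_gt {α : Type*} [LinearOrder α] {f : α → α}
    (hup : ∀ t u, f t < t → f t ≤ u → f u = f t)
    (hdown : ∀ t u, t < f t → u ≤ f t → f u = f t) : Monotone f := by
  intro t t' htt'
  by_contra! h
  rcases lt_or_ge t (f t) with ht | ht
  · rcases le_or_gt t' (f t) with ht' | ht'
    · exact h.ne (hdown t t' ht ht')
    · have hleft := hup t' (f t) (h.trans ht') h.le
      exact h.ne (hleft.symm.trans (hdown t (f t) ht le_rfl))
  · exact h.ne (hup t' t (h.trans_le (ht.trans htt')) (h.le.trans ht)).symm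

namespace Uncompromising

variable {n : ℕ} {M : (Fin n → I) → I}

theorem update_eq (hM : Uncompromising M) {x : Fin n → I} {i : Fin n} {t : I}
    (h : x i = t ∨ (M x < x i ∧ M x ≤ t) ∨ (x i < M x ∧ t ≤ M x)) :
    M (update x i t) = M x := by
  rcases h with rfl | ⟨hlt, hle⟩ | ⟨hlt, hle⟩
  · rw [update_eq_self]
  · exact (hM x i).1 hlt t hle
  · exact (hM x i).2 hlt t hle

theorem apply_eq (hM : Uncompromising M) {x y : Fin n → I}
    (h : ∀ i, x i = y i ∨ (M x < x i ∧ M x ≤ y i) ∨ (x i < M x ∧ y i ≤ M x)) :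
    M y = M x := by
  set c := M x
  refine Pi.rel_of_forall_update (C := fun _ s t => s = t ∨ (c < s ∧ c ≤ t) ∨ (s < c ∧ t ≤ c))
    (R := fun z w => M z = c → M w = c) (fun _ => id) (fun _ _ _ hxy hyz => hyz ∘ hxy)
    (fun z i t hC hz => ?_) h rfl
  rw [← hz] at hC ⊢
  exact hM.update_eq hC

theorem monotone_update (hM : Uncompromising M) (x : Fin n → I) (i : Fin n) :
    Monotone fun t => M (update x i t) := by
  refine monotone_of_eq_of_lt_of_eq_of_gt (fun t u ht hu => ?_) (fun t u ht hu => ?_) <;>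
  · rw [← update_idem (a := i) t u x]
    refine hM.update_eq (Or.inr ?_)
    rw [update_self]
    tauto

theorem monotone (hM : Uncompromising M) : Monotone M := fun x y hxy =>
  Pi.rel_of_forall_update (C := fun _ s t => s ≤ t) (R := fun x y => M x ≤ M y) (fun _ => le_rfl)
    (fun _ _ _ => le_trans)
    (fun z i t h => by simpa using hM.monotone_update z i h) hxy

end Uncompromising

theorem Finset.sup_update_of_notMem {α β : Type*} [DecidableEq α] [SemilatticeSup β]
    [OrderBot β] {S : Finset α} {f : α → β} {i : α} (hi : i ∉ S) (t : β) :
    S.sup (update f i t) = S.sup f :=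
  Finset.sup_congr rfl fun _ hj => update_of_ne (ne_of_mem_of_not_mem hj hi) _ _

def generalizedMedian {ι α : Type*} [Fintype ι] [LinearOrder α] [BoundedOrder α]
    (a : Finset ι → α) (x : ι → α) : α :=
  Finset.univ.inf fun S => max (S.sup x) (a S)

section GeneralizedMedian

variable {ι α : Type*} [Fintype ι] [LinearOrder α] [BoundedOrder α]
  (a : Finset ι → α) (x : ι → α)

theorem generalizedMedian_le (S : Finset ι) : generalizedMedian a x ≤ max (S.sup x) (a S) :=
  Finset.inf_le (Finset.mem_univ S)

theorem le_generalizedMedian_iff {c : α} :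
    c ≤ generalizedMedian a x ↔ ∀ S : Finset ι, c ≤ max (S.sup x) (a S) := by
  simp [generalizedMedian]

theorem exists_eq_generalizedMedian :
    ∃ S : Finset ι, max (S.sup x) (a S) = generalizedMedian a x := by
  obtain ⟨S, -, hS⟩ := Finset.exists_mem_eq_inf Finset.univ Finset.univ_nonempty
    fun S : Finset ι => max (S.sup x) (a S)
  exact ⟨S, hS.symm⟩

variable [DecidableEq ι] {a x}

theorem generalizedMedian_update_of_lt {i : ι} {t : α} (hi : generalizedMedian a x < x i)
    (ht : generalizedMedian a x ≤ t) :
    generalizedMedian a (update x i t) = generalizedMedian a x := by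
  obtain ⟨S₀, hS₀⟩ := exists_eq_generalizedMedian a x
  have hiS₀ : i ∉ S₀ := fun hmem =>
    hi.not_ge (hS₀ ▸ le_max_of_le_left (Finset.le_sup hmem))
  refine le_antisymm ?_ ((le_generalizedMedian_iff _ _).2 fun S => ?_)
  · calc generalizedMedian a (update x i t) ≤ max (S₀.sup (update x i t)) (a S₀) :=
          generalizedMedian_le _ _ S₀
      _ = generalizedMedian a x := by rw [Finset.sup_update_of_notMem hiS₀, hS₀]
  · by_cases hiS : i ∈ S
    · refine le_max_of_le_left (ht.trans ?_)
      simpa using Finset.le_sup (f := update x i t) hiS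
    · rw [Finset.sup_update_of_notMem hiS]
      exact generalizedMedian_le _ _ S

theorem generalizedMedian_update_of_gt {i : ι} {t : α} (hi : x i < generalizedMedian a x)
    (ht : t ≤ generalizedMedian a x) :
    generalizedMedian a (update x i t) = generalizedMedian a x := by
  obtain ⟨S₀, hS₀⟩ := exists_eq_generalizedMedian a x
  refine le_antisymm ((generalizedMedian_le _ _ S₀).trans (max_le ?_ ?_))
    ((le_generalizedMedian_iff _ _).2 fun S => ?_)
  · refine Finset.sup_le fun j hj => ?_
    rcases eq_or_ne j i with rfl | hji
    · simpa using ht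
    · rw [update_of_ne hji, ← hS₀]
      exact le_max_of_le_left (Finset.le_sup hj)
  · exact hS₀ ▸ le_max_right _ _
  · rcases le_max_iff.1 (generalizedMedian_le a x S) with hsup | ha
    · obtain ⟨j, hjS, hj⟩ := (Finset.le_sup_iff (bot_le.trans_lt hi)).1 hsup
      have hji : j ≠ i := by rintro rfl; exact hj.not_gt hi
      refine le_max_of_le_left (hj.trans ?_)
      simpa [update_of_ne hji] using Finset.le_sup (f := update x i t) hjS
    · exact le_max_of_le_right ha

end GeneralizedMedian

theorem uncompromising_generalizedMedian {n : ℕ} (a : Finset (Fin n) → I) :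
    Uncompromising (generalizedMedian a) := fun _ _ =>
  ⟨fun hi _ ht => generalizedMedian_update_of_lt hi ht,
    fun hi _ ht => generalizedMedian_update_of_gt hi ht⟩

theorem Uncompromising.eq_generalizedMedian {n : ℕ} {M : (Fin n → I) → I}
    (hM : Uncompromising M) : M = generalizedMedian fun S => M (S.piecewise 0 1) := by
  funext x
  refine le_antisymm ((le_generalizedMedian_iff _ _).2 fun S => ?_) ?_
  · by_contra! hlt
    have hS : ∀ i ∈ S, x i < M x := fun i hi =>
      (le_max_of_le_left (Finset.le_sup hi)).trans_lt hlt
    have hdown : M (S.piecewise 0 x) = M x := hM.apply_eq fun i => by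
      by_cases hi : i ∈ S <;> simp [hi, hS]
    have hle : M x ≤ M (S.piecewise 0 1) :=
      hdown ▸ hM.monotone (S.piecewise_le_piecewise le_rfl fun _ => le_one')
    exact hlt.not_ge (le_max_of_le_right hle)
  · set S := Finset.univ.filter fun i => x i ≤ M x
    refine (generalizedMedian_le _ x S).trans
      (max_le (Finset.sup_le fun i hi => by simp_all [S]) ?_)
    have hup : M (S.piecewise x 1) = M x := hM.apply_eq fun i => by
      by_cases hi : x i ≤ M x <;> simp [S, hi, le_one', lt_of_not_ge]
    exact hup ▸ hM.monotone (S.piecewise_le_piecewise (fun _ => nonneg') le_rfl)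

theorem uncompromising_iff_GMM (n : ℕ) (M : (Fin n → I) → I) :
    Uncompromising M ↔ IsGMM M := by
  constructor
  · intro hM
    exact ⟨_, congrFun hM.eq_generalizedMedian⟩
  · rintro ⟨a, ha⟩
    obtain rfl : M = generalizedMedian a := funext ha
    exact uncompromising_generalizedMedian a
end
end

section
/- The mechanism that locates the facility at 1/4 if a designated agent i reports a location ≤ 1/2 and at 3/4 otherwise is DIC when k = n, but is not DIC for any capacity k < n (with n ≥ 2). -/
open scoped Classical
open unitInterval

noncomputable section

/-- The dictatorial-style mechanism of Example 3.3: locate the facility at `1/4` if the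
designated agent `i` reports a location `≤ 1/2`, and at `3/4` otherwise. -/
def quarterMech {n : ℕ} (i : Fin n) (x : Fin n → I) : I :=
  if (x i : ℝ) ≤ 1 / 2 then (⟨1 / 4, by norm_num⟩ : I) else (⟨3 / 4, by norm_num⟩ : I)

/-! Under capacity `n` everyone is served, so utility is `1 - |s - x_j|`; only agent `i` moves
the facility, and `1/4` (resp. `3/4`) is the closer of the two outcomes to any location `≤ 1/2`
(resp. `> 1/2`). Under capacity `k < n`, put agent `i` at `1/2` and everybody else at `1/4`:
truthfully the facility lands among the others and `i` is squeezed out, while reporting `1` moves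
it to `3/4`, where `i` is the closest agent. -/

lemma prio_irrefl {n : ℕ} (x : Fin n → I) (s : I) (i : Fin n) : ¬ prio x s i i := by
  rintro (h | ⟨-, h⟩) <;> exact lt_irrefl _ h

lemma served_of_le {n k : ℕ} (x : Fin n → I) (s : I) (i : Fin n) (hk : n ≤ k) :
    served x s k i := by
  have hsub : {j | prio x s j i} ⊆ ({i}ᶜ : Set (Fin n)) := fun j hj (hji : j = i) =>
    prio_irrefl x s j (hji ▸ hj)
  calc {j | prio x s j i}.ncard ≤ ({i}ᶜ : Set (Fin n)).ncard := Set.ncard_le_ncard hsub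
    _ < (Set.univ : Set (Fin n)).ncard :=
        Set.ncard_lt_ncard (Set.ssubset_univ_iff.mpr (Set.compl_ne_univ.mpr ⟨i, rfl⟩))
    _ ≤ k := by simpa using hk

lemma util_of_le {n k : ℕ} (x : Fin n → I) (s : I) (i : Fin n) (hk : n ≤ k) :
    util x s k i = 1 - |(s : ℝ) - x i| :=
  if_pos (served_of_le x s i hk)

lemma served_of_forall_abs_lt {n k : ℕ} (x : Fin n → I) (s : I) (i : Fin n) (hk : 0 < k)
    (hclose : ∀ j ≠ i, |(s : ℝ) - x i| < |(s : ℝ) - x j|) : served x s k i := by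
  have hempty : {j | prio x s j i} = ∅ := by
    refine Set.eq_empty_of_forall_notMem fun j hj => ?_
    by_cases hji : j = i
    · exact prio_irrefl x s j (hji ▸ hj)
    · have := hclose j hji
      rcases hj with h | ⟨h, -⟩ <;> linarith
  simpa [served, hempty] using hk

lemma not_served_of_forall_abs_lt {n k : ℕ} (x : Fin n → I) (s : I) (i : Fin n) (hk : k < n)
    (hfar : ∀ j ≠ i, |(s : ℝ) - x j| < |(s : ℝ) - x i|) : ¬ served x s k i := by
  have hcompl : ({i}ᶜ : Set (Fin n)) ⊆ {j | prio x s j i} := fun j hj => Or.inl (hfar j hj)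
  have hcard : ({i}ᶜ : Set (Fin n)).ncard = n - 1 := by
    rw [Set.ncard_compl, Set.ncard_singleton, Nat.card_eq_fintype_card, Fintype.card_fin]
  have := Set.ncard_le_ncard hcompl
  unfold served
  omega

theorem DIC_self_of_forall_abs_le {n : ℕ} (M : (Fin n → I) → I)
    (hM : ∀ (i : Fin n) (x y : Fin n → I) (x' : I),
      |(M (Function.update y i (x i)) : ℝ) - x i| ≤ |(M (Function.update y i x') : ℝ) - x i|) :
    DIC n n M := by
  intro i x y x'
  rw [util_of_le _ _ _ le_rfl, util_of_le _ _ _ le_rfl]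
  linarith [hM i x y x']

section quarterMech

variable {n : ℕ} (i : Fin n)

lemma coe_quarterMech (x : Fin n → I) :
    (quarterMech i x : ℝ) = if (x i : ℝ) ≤ 1 / 2 then 1 / 4 else 3 / 4 := by
  unfold quarterMech
  split_ifs <;> rfl

lemma quarterMech_update_of_ne {j : Fin n} (hji : j ≠ i) (y : Fin n → I) (t : I) :
    quarterMech i (Function.update y j t) = quarterMech i y := by
  simp only [quarterMech, Function.update_of_ne hji.symm]

lemma abs_quarterMech_sub_le (x z : Fin n → I) :
    |(quarterMech i x : ℝ) - x i| ≤ |(quarterMech i z : ℝ) - x i| := by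
  rw [coe_quarterMech, coe_quarterMech]
  split_ifs <;> grind

theorem quarterMech_DIC_self : DIC n n (quarterMech i) := by
  refine DIC_self_of_forall_abs_le _ fun j x y x' => ?_
  by_cases hji : j = i
  · subst hji
    simpa using abs_quarterMech_sub_le j (Function.update y j (x j)) (Function.update y j x')
  · rw [quarterMech_update_of_ne i hji, quarterMech_update_of_ne i hji]

theorem not_quarterMech_DIC {k : ℕ} (hk : 0 < k) (hkn : k < n) : ¬ DIC n k (quarterMech i) := by
  intro hDIC
  let x : Fin n → I := Function.update (fun _ => ⟨1 / 4, by norm_num⟩) i ⟨1 / 2, by norm_num⟩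
  have hxi : (x i : ℝ) = 1 / 2 := by simp [x]
  have hxj : ∀ j ≠ i, (x j : ℝ) = 1 / 4 := fun j hj => by simp [x, Function.update_of_ne hj]
  have htruth : (quarterMech i x : ℝ) = 1 / 4 := by simp [coe_quarterMech, hxi]
  have hlie : (quarterMech i (Function.update x i 1) : ℝ) = 3 / 4 := by
    norm_num [coe_quarterMech]
  have hexcluded : util x (quarterMech i x) k i = 0 := by
    refine if_neg (not_served_of_forall_abs_lt x _ i hkn fun j hj => ?_)
    rw [htruth, hxi, hxj j hj]
    norm_num
  have hserved : util x (quarterMech i (Function.update x i 1)) k i = 3 / 4 := by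
    refine (if_pos (served_of_forall_abs_lt x _ i hk fun j hj => ?_)).trans ?_
    · rw [hlie, hxi, hxj j hj]
      norm_num
    · rw [hlie, hxi]
      norm_num
  have := hDIC i x x 1
  rw [Function.update_eq_self, hexcluded, hserved] at this
  norm_num at this

end quarterMech

theorem quarterMech_DIC_iff_general (n : ℕ) (i : Fin n) :
    DIC n n (quarterMech i) ∧
    (∀ k, 1 ≤ k → k < n → ¬ DIC n k (quarterMech i)) :=
  ⟨quarterMech_DIC_self i, fun _ hk hkn => not_quarterMech_DIC i hk hkn⟩

theorem quarterMech_DIC_iff (n : ℕ) (hn : 2 ≤ n) (i : Fin n) :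
    DIC n n (quarterMech i) ∧
    (∀ k, 1 ≤ k → k < n → ¬ DIC n k (quarterMech i)) :=
  quarterMech_DIC_iff_general n i
end
end

section
/- For n ≥ 2 and ⌈(n-1)/2⌉ < k ≤ n with (n−1)/(k+1) > 1, every uncompromising mechanism has worst-case approximation ratio at least (n−1)/(k+1): for every ε > 0 there exists a profile x with Π*(x,k)/Π_M(x,k) > (n−1)/(k+1) − ε. -/
open scoped Classical
open unitInterval

noncomputable section

/-!
Move the agents one by one from `1` to `0`. Unless the facility is already at distance at least
`1 / 2` from the agents of one of the two unanimous profiles, it crosses `1 / 2` at some step, and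
the uncompromising property lets the moving agent, reported at `1 / 2`, pin it there. Either way all
agents but at most one are at distance at least `1 / 2` from the facility, and at most `k` agents
are served, so `Π_M ≤ (k + 1) / 2`. On the other hand some end point carries at least `(n - 1) / 2`
agents or `k` of them, and serving those gives `Π* ≥ (n - 1) / 2`.
-/

section Welfare

variable {n : ℕ} (x : Fin n → I) (s : I) (k : ℕ)

lemma prio_iff_toLex_lt (i j : Fin n) :
    prio x s j i ↔ toLex (|(s : ℝ) - x j|, j) < toLex (|(s : ℝ) - x i|, i) := by
  rw [Prod.Lex.toLex_lt_toLex]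
  rfl

lemma prio_iff_of_apply_eq {i : Fin n} (hi : x i = s) (j : Fin n) :
    prio x s j i ↔ x j = s ∧ j < i := by
  have hdist : |(s : ℝ) - x j| = 0 ↔ x j = s := by
    rw [abs_eq_zero, sub_eq_zero, eq_comm, Subtype.coe_inj]
  simp only [prio, hi, sub_self, abs_zero, (abs_nonneg _).not_gt, false_or, hdist]

lemma card_served_le : (Finset.univ.filter (served x s k)).card ≤ k := by
  set S := Finset.univ.filter (served x s k)
  by_contra! hS
  have hne : S.Nonempty := Finset.card_pos.1 (by omega)
  -- the last served agent in priority order is preceded by all the others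
  obtain ⟨i, hiS, hmax⟩ := S.exists_max_image (fun j => toLex (|(s : ℝ) - x j|, j)) hne
  have hsub : ((S.erase i : Finset (Fin n)) : Set (Fin n)) ⊆ {j | prio x s j i} := by
    intro j hj
    obtain ⟨hji, hjS⟩ := Finset.mem_erase.1 hj
    refine (prio_iff_toLex_lt x s i j).2 ((hmax j hjS).lt_of_ne ?_)
    intro h
    exact hji (congrArg (fun p => (ofLex p).2) h)
  have hserved : served x s k i := (Finset.mem_filter.1 hiS).2
  have := (Set.ncard_le_ncard hsub).trans_lt hserved
  rw [Set.ncard_coe_finset, Finset.card_erase_of_mem hiS] at this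
  omega

lemma min_card_le_card_filter_served :
    min k (Finset.univ.filter (x · = s)).card ≤
      ((Finset.univ.filter (x · = s)).filter (served x s k)).card := by
  set A := Finset.univ.filter (x · = s)
  by_contra! hlt
  -- the first unserved agent at `s` is preceded only by served agents at `s`
  have hne : (A.filter fun i => ¬ served x s k i).Nonempty := by
    rw [← Finset.card_pos]
    have := A.card_filter_add_card_filter_not (served x s k)
    omega
  obtain ⟨i, hi_mem, hi_min⟩ := (A.filter fun i => ¬ served x s k i).exists_min_image id hne
  obtain ⟨hiA, hi⟩ := Finset.mem_filter.1 hi_mem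
  have hxi : x i = s := (Finset.mem_filter.1 hiA).2
  have hsub : {j | prio x s j i} ⊆ ((A.filter (served x s k) : Finset (Fin n)) : Set (Fin n)) := by
    intro j hj
    obtain ⟨hxj, hji⟩ := (prio_iff_of_apply_eq x s hxi j).1 hj
    have hjA : j ∈ A := Finset.mem_filter.2 ⟨Finset.mem_univ j, hxj⟩
    refine Finset.mem_filter.2 ⟨hjA, ?_⟩
    by_contra hj'
    exact hji.not_ge (hi_min j (Finset.mem_filter.2 ⟨hjA, hj'⟩))
  have := Set.ncard_le_ncard hsub
  rw [Set.ncard_coe_finset] at this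
  exact hi (by unfold served; omega)

lemma one_sub_dist_nonneg (i : Fin n) : 0 ≤ 1 - |(s : ℝ) - x i| := by
  rw [sub_nonneg, abs_le]
  constructor <;> linarith [Set.mem_Icc.1 s.2, Set.mem_Icc.1 (x i).2]

lemma welfare_eq_sum_served :
    welfare x k s = ∑ i ∈ Finset.univ.filter (served x s k), (1 - |(s : ℝ) - x i|) := by
  rw [Finset.sum_filter]
  rfl

lemma welfare_nonneg : 0 ≤ welfare x k s := by
  rw [welfare_eq_sum_served]
  exact Finset.sum_nonneg fun i _ => one_sub_dist_nonneg x s i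

lemma welfare_le_card : welfare x k s ≤ n := by
  calc welfare x k s ≤ ∑ _i : Fin n, (1 : ℝ) := by
        refine Finset.sum_le_sum fun i _ => ?_
        unfold util
        split_ifs <;> linarith [abs_nonneg ((s : ℝ) - x i)]
    _ = n := by simp

lemma welfare_le_optWelfare : welfare x k s ≤ optWelfare x k :=
  le_ciSup (f := welfare x k) ⟨n, by rintro _ ⟨t, rfl⟩; exact welfare_le_card x t k⟩ s

lemma min_card_le_welfare :
    ((min k (Finset.univ.filter (x · = s)).card : ℕ) : ℝ) ≤ welfare x k s := by
  set A := Finset.univ.filter (x · = s)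
  calc ((min k A.card : ℕ) : ℝ) ≤ ((A.filter (served x s k)).card : ℝ) :=
        Nat.cast_le.2 (min_card_le_card_filter_served x s k)
    _ = ∑ i ∈ A.filter (served x s k), (1 - |(s : ℝ) - x i|) := by
        rw [Finset.card_eq_sum_ones, Nat.cast_sum, Nat.cast_one]
        refine Finset.sum_congr rfl fun i hi => ?_
        rw [(Finset.mem_filter.1 (Finset.mem_filter.1 hi).1).2, sub_self, abs_zero, sub_zero]
    _ ≤ ∑ i ∈ Finset.univ.filter (served x s k), (1 - |(s : ℝ) - x i|) :=
        Finset.sum_le_sum_of_subset_of_nonneg (Finset.filter_subset_filter _ (A.subset_univ))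
          fun i _ _ => one_sub_dist_nonneg x s i
    _ = welfare x k s := (welfare_eq_sum_served x s k).symm

lemma welfare_le_of_le_dist {δ : ℝ} (hδ₀ : 0 ≤ δ) (hδ₁ : δ ≤ 1) (c : Fin n)
    (hfar : ∀ i ≠ c, δ ≤ |(s : ℝ) - x i|) :
    welfare x k s ≤ k * (1 - δ) + δ := by
  set S := Finset.univ.filter (served x s k)
  have hterm : ∀ i ∈ S, 1 - |(s : ℝ) - x i| ≤ (1 - δ) + if c = i then δ else 0 := by
    intro i _
    split_ifs with h
    · linarith [abs_nonneg ((s : ℝ) - x i)]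
    · linarith [hfar i (Ne.symm h)]
  have hS : (S.card : ℝ) ≤ k := by exact_mod_cast card_served_le x s k
  calc welfare x k s ≤ ∑ i ∈ S, ((1 - δ) + if c = i then δ else 0) := by
        rw [welfare_eq_sum_served]; exact Finset.sum_le_sum hterm
    _ = S.card * (1 - δ) + if c ∈ S then δ else 0 := by
        rw [Finset.sum_add_distrib, Finset.sum_const, nsmul_eq_mul, Finset.sum_ite_eq]
    _ ≤ k * (1 - δ) + δ := by
        have : (if c ∈ S then δ else 0) ≤ δ := by split_ifs <;> linarith
        nlinarith

end Welfare

theorem Uncompromising.apply_eq_of_update {n : ℕ} {M : (Fin n → I) → I} (hM : Uncompromising M)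
    (x : Fin n → I) (i : Fin n) (h₁ : (x i : ℝ) ≤ M (Function.update x i 1))
    (h₀ : (M (Function.update x i 0) : ℝ) ≤ x i) : M x = x i := by
  rcases lt_trichotomy (M x : ℝ) (x i) with hlt | heq | hgt
  · have := (hM x i).1 hlt 1 (M x).2.2
    rw [this] at h₁
    exact absurd h₁ hlt.not_ge
  · exact Subtype.ext heq
  · have := (hM x i).2 hgt 0 (M x).2.1
    rw [this] at h₀
    exact absurd h₀ hgt.not_ge

def stepProfile (n j : ℕ) : Fin n → I := fun i => if i.val < j then 0 else 1

def splitProfile {n : ℕ} (c : Fin n) : Fin n → I :=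
  fun i => if i < c then 0 else if i = c then ⟨1 / 2, by norm_num, by norm_num⟩ else 1

section Profiles

variable {n : ℕ}

lemma stepProfile_zero : stepProfile n 0 = fun _ => 1 := by
  funext i
  simp [stepProfile]

lemma stepProfile_of_le {j : ℕ} (h : n ≤ j) : stepProfile n j = fun _ => 0 := by
  funext i
  simp [stepProfile, i.isLt.trans_le h]

lemma update_splitProfile_one (c : Fin n) :
    Function.update (splitProfile c) c 1 = stepProfile n c := by
  funext i
  rcases lt_trichotomy i c with h | rfl | h
  · simp [splitProfile, stepProfile, h, h.ne, Fin.lt_def.1 h]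
  · simp [stepProfile]
  · simp [splitProfile, stepProfile, h.ne', h.not_gt, (Fin.lt_def.1 h).not_gt]

lemma update_splitProfile_zero (c : Fin n) :
    Function.update (splitProfile c) c 0 = stepProfile n (c + 1) := by
  funext i
  rcases lt_trichotomy i c with h | rfl | h
  · simp [splitProfile, stepProfile, h, h.ne, Nat.lt_succ_of_lt (Fin.lt_def.1 h)]
  · simp [stepProfile]
  · have : ¬ i.val < c + 1 := by have := Fin.lt_def.1 h; omega
    simp [splitProfile, stepProfile, h.ne', h.not_gt, this]

lemma coe_splitProfile_self (c : Fin n) : (splitProfile c c : ℝ) = 1 / 2 := by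
  simp [splitProfile]

lemma abs_half_sub_splitProfile {c i : Fin n} (h : i ≠ c) :
    |1 / 2 - (splitProfile c i : ℝ)| = 1 / 2 := by
  rcases h.lt_or_gt with h | h
  · simp [splitProfile, h]
  · simp [splitProfile, h.ne', h.not_gt]; norm_num

lemma filter_splitProfile_eq_zero (c : Fin n) :
    Finset.univ.filter (splitProfile c · = 0) = Finset.Iio c := by
  ext i
  rcases lt_trichotomy i c with h | rfl | h
  · simp [splitProfile, h]
  · simp only [Finset.mem_filter, Finset.mem_univ, true_and, Finset.mem_Iio, lt_irrefl,
      iff_false, ← Subtype.coe_inj, coe_splitProfile_self]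
    norm_num
  · simp [splitProfile, h.ne', h.not_gt]

lemma filter_splitProfile_eq_one (c : Fin n) :
    Finset.univ.filter (splitProfile c · = 1) = Finset.Ioi c := by
  ext i
  rcases lt_trichotomy i c with h | rfl | h
  · simp [splitProfile, h, h.not_gt]
  · simp only [Finset.mem_filter, Finset.mem_univ, true_and, Finset.mem_Ioi, lt_irrefl,
      iff_false, ← Subtype.coe_inj, coe_splitProfile_self]
    norm_num
  · simp [splitProfile, h.ne', h.not_gt, h]

end Profiles

section LowerBound

variable {n : ℕ} {k : ℕ}

lemma half_pred_le_optWelfare_const (hk : n < 2 * k) (c : I) :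
    ((n : ℝ) - 1) / 2 ≤ optWelfare (fun _ : Fin n => c) k := by
  have h := (min_card_le_welfare (fun _ : Fin n => c) c k).trans (welfare_le_optWelfare _ c k)
  rw [Finset.filter_true_of_mem fun _ _ => rfl, Finset.card_univ, Fintype.card_fin] at h
  have : (n : ℝ) ≤ 2 * (min k n : ℕ) + 1 := by exact_mod_cast (by omega : n ≤ 2 * min k n + 1)
  linarith

lemma half_pred_le_optWelfare_splitProfile (hk : n < 2 * k) (c : Fin n) :
    ((n : ℝ) - 1) / 2 ≤ optWelfare (splitProfile c) k := by
  have h₀ := (min_card_le_welfare (splitProfile c) 0 k).trans (welfare_le_optWelfare _ 0 k)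
  have h₁ := (min_card_le_welfare (splitProfile c) 1 k).trans (welfare_le_optWelfare _ 1 k)
  rw [filter_splitProfile_eq_zero, Fin.card_Iio] at h₀
  rw [filter_splitProfile_eq_one, Fin.card_Ioi] at h₁
  rcases (by omega : n ≤ 2 * min k c + 1 ∨ n ≤ 2 * min k (n - 1 - c) + 1) with h | h
  · have : (n : ℝ) ≤ 2 * (min k c : ℕ) + 1 := by exact_mod_cast h
    linarith
  · have : (n : ℝ) ≤ 2 * (min k (n - 1 - c) : ℕ) + 1 := by exact_mod_cast h
    linarith

theorem exists_welfare_le_and_le_optWelfare (hn : 0 < n) (hk : n < 2 * k)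
    {M : (Fin n → I) → I} (hM : Uncompromising M) :
    ∃ x : Fin n → I, welfare x k (M x) ≤ ((k : ℝ) + 1) / 2 ∧
      ((n : ℝ) - 1) / 2 ≤ optWelfare x k := by
  have hfar : ∀ (x : Fin n → I) (c : Fin n), (∀ i ≠ c, 1 / 2 ≤ |(M x : ℝ) - x i|) →
      welfare x k (M x) ≤ ((k : ℝ) + 1) / 2 := by
    intro x c h
    have := welfare_le_of_le_dist x (M x) k (by norm_num) (by norm_num) c h
    linarith
  have c₀ : Fin n := ⟨0, hn⟩
  by_cases h₁ : (M (fun _ => 1) : ℝ) ≤ 1 / 2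
  · refine ⟨fun _ => 1, hfar _ c₀ fun i _ => ?_, half_pred_le_optWelfare_const hk 1⟩
    rw [Set.Icc.coe_one, abs_sub_comm, abs_of_nonneg (by linarith [(M fun _ => 1).2.2])]
    linarith
  by_cases h₀ : 1 / 2 ≤ (M (fun _ => 0) : ℝ)
  · refine ⟨fun _ => 0, hfar _ c₀ fun i _ => ?_, half_pred_le_optWelfare_const hk 0⟩
    rwa [Set.Icc.coe_zero, sub_zero, abs_of_nonneg (M fun _ => 0).2.1]
  obtain ⟨m, hm, hm₁⟩ := Nat.exists_not_and_succ_of_not_zero_of_exists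
    (p := fun j => (M (stepProfile n j) : ℝ) ≤ 1 / 2) (by rwa [stepProfile_zero])
    ⟨n, by rw [stepProfile_of_le le_rfl]; linarith⟩
  have hmn : m < n := by
    by_contra! h
    exact hm (by rw [stepProfile_of_le h]; linarith)
  set c : Fin n := ⟨m, hmn⟩
  have hMc : (M (splitProfile c) : ℝ) = 1 / 2 := by
    rw [hM.apply_eq_of_update _ c, coe_splitProfile_self]
    · rw [update_splitProfile_one, coe_splitProfile_self]
      exact (not_le.1 hm).le
    · rw [update_splitProfile_zero, coe_splitProfile_self]
      exact hm₁
  refine ⟨splitProfile c, hfar _ c fun i hi => ?_, half_pred_le_optWelfare_splitProfile hk c⟩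
  rw [hMc, abs_half_sub_splitProfile hi]

end LowerBound

lemma sub_mul_lt_of_mul_le {R ε W P : ℝ} (hε : 0 < ε) (hW : 0 ≤ W) (hP : 0 < P)
    (h : R * W ≤ P) : (R - ε) * W < P := by
  rcases hW.eq_or_lt with rfl | hW
  · simpa using hP
  · nlinarith

theorem DIC_lower_bound_large_k_general (n k : ℕ) (hn : 2 ≤ n)
    (hk1 : n < 2 * k)  -- i.e. `⌈(n-1)/2⌉ < k`
    (M : (Fin n → I) → I) (hM : Uncompromising M) :
    ∀ ε : ℝ, 0 < ε →
      ∃ x : Fin n → I,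
        (((n : ℝ) - 1) / ((k : ℝ) + 1) - ε) * welfare x k (M x) < optWelfare x k := by
  intro ε hε
  obtain ⟨x, hW, hopt⟩ := exists_welfare_le_and_le_optWelfare (by omega) hk1 hM
  have hn' : (2 : ℝ) ≤ n := by exact_mod_cast hn
  refine ⟨x, sub_mul_lt_of_mul_le hε (welfare_nonneg x _ k) (by linarith) ?_⟩
  calc ((n : ℝ) - 1) / ((k : ℝ) + 1) * welfare x k (M x)
      ≤ ((n : ℝ) - 1) / ((k : ℝ) + 1) * (((k : ℝ) + 1) / 2) := by
        gcongr
        exact div_nonneg (by linarith) (by positivity)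
    _ = ((n : ℝ) - 1) / 2 := by field_simp
    _ ≤ optWelfare x k := hopt

theorem DIC_lower_bound_large_k (n k : ℕ) (hn : 2 ≤ n)
    (hk1 : n < 2 * k)  -- i.e. `⌈(n-1)/2⌉ < k`
    (hk2 : k ≤ n) (hratio : (1 : ℝ) < ((n : ℝ) - 1) / ((k : ℝ) + 1))
    (M : (Fin n → I) → I) (hM : Uncompromising M) :
    ∀ ε : ℝ, 0 < ε →
      ∃ x : Fin n → I,
        (((n : ℝ) - 1) / ((k : ℝ) + 1) - ε) * welfare x k (M x) < optWelfare x k :=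
  DIC_lower_bound_large_k_general n k hn hk1 M hM
end
end

section
/- For n ≥ 5 and capacity k > ⌊(n+1)/2⌋, the median mechanism's welfare satisfies Π_M(x,k) ≥ Π*(x,k) − (n+1−k) for every profile x, and since Π*(x,k) ≥ k/2, the median mechanism is a (1 + 2(n+1−k)/(3k−2n−2))-approximation when 3k − 2n − 2 > 0. -/
open scoped Classical
open unitInterval

noncomputable section

/-!
Each agent's utility at `s` is at most `1 - |s - xᵢ|`, and the median minimizes `∑ |s - xᵢ|`,
so the welfare at any location is at most `∑ (1 - |med - xᵢ|)`. At the median only the `n - k`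
unserved agents are lost, each worth at most `1`, hence `Π* ≤ Π_M + (n - k)`. At `s = 1/2` every
one of the (at least `k`) served agents gets at least `1/2`, so `Π* ≥ k/2`; together the two
bounds give `2 Π_M ≥ 3k - 2n - 2` and the approximation ratio.
-/

open Finset

theorem List.Pairwise.rel_getElem_of_le {α : Type*} {R : α → α → Prop} [Std.Refl R] {l : List α}
    (h : l.Pairwise R) {i j : ℕ} (hij : i ≤ j) (hj : j < l.length) :
    R l[i] l[j] := by
  obtain rfl | hlt := hij.eq_or_lt
  · exact refl _
  · exact List.pairwise_iff_getElem.1 h i j _ hj hlt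

section SortedList

variable {α : Type*} [Preorder α] [DecidableLE α] {l : List α}

theorem List.Pairwise.succ_le_countP_le_getElem (hl : l.Pairwise (· ≤ ·)) {j : ℕ}
    (hj : j < l.length) : j + 1 ≤ l.countP (· ≤ l[j]) := by
  have hall : ∀ a ∈ l.take (j + 1), a ≤ l[j] := by
    intro a ha
    obtain ⟨i, hi, rfl⟩ := List.mem_take_iff_getElem.1 ha
    exact hl.rel_getElem_of_le (by omega) hj
  calc j + 1 = (l.take (j + 1)).countP (· ≤ l[j]) := by
        rw [List.countP_eq_length.2 (by simpa using hall), List.length_take]; omega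
    _ ≤ l.countP (· ≤ l[j]) := (List.take_sublist _ _).countP_le

theorem List.Pairwise.length_sub_le_countP_getElem_le (hl : l.Pairwise (· ≤ ·)) {j : ℕ}
    (hj : j < l.length) : l.length - j ≤ l.countP (l[j] ≤ ·) := by
  have hall : ∀ a ∈ l.drop j, l[j] ≤ a := by
    intro a ha
    obtain ⟨i, hi, rfl⟩ := List.mem_drop_iff_getElem.1 ha
    exact hl.rel_getElem_of_le (by omega) _
  calc l.length - j = (l.drop j).countP (l[j] ≤ ·) := by
        rw [List.countP_eq_length.2 (by simpa using hall), List.length_drop]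
    _ ≤ l.countP (l[j] ≤ ·) := (List.drop_sublist _ _).countP_le

end SortedList

theorem abs_sub_add_mul_sign_le_abs_sub {m t y : ℝ} (hmt : m ≤ t) :
    |m - y| + (t - m) * (if y ≤ m then 1 else -1) ≤ |t - y| := by
  split_ifs with hy
  · rw [abs_of_nonneg (by linarith), abs_of_nonneg (by linarith)]
    linarith
  · rw [abs_of_neg (by linarith)]
    linarith [neg_abs_le (t - y)]

theorem sum_abs_sub_le_of_le_two_mul_card {ι : Type*} (s : Finset ι) (y : ι → ℝ) {m : ℝ}
    (hl : #s ≤ 2 * #{i ∈ s | y i ≤ m}) (hr : #s ≤ 2 * #{i ∈ s | m ≤ y i}) (t : ℝ) :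
    ∑ i ∈ s, |m - y i| ≤ ∑ i ∈ s, |t - y i| := by
  wlog hmt : m ≤ t generalizing y m t
  · have := this (fun i => -y i) (m := -m) (by simpa using hr) (by simpa using hl) (-t)
      (by linarith)
    simpa only [neg_sub_neg, abs_sub_comm] using this
  have hsign : 0 ≤ ∑ i ∈ s, (if y i ≤ m then (1 : ℝ) else -1) := by
    have hcard := card_filter_add_card_filter_not (s := s) (fun i => y i ≤ m)
    rw [sum_ite, sum_const, sum_const, nsmul_eq_mul, nsmul_eq_mul]
    have : (#{i ∈ s | ¬y i ≤ m} : ℝ) ≤ #{i ∈ s | y i ≤ m} := by exact_mod_cast (by omega)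
    linarith
  calc ∑ i ∈ s, |m - y i|
      ≤ ∑ i ∈ s, |m - y i| + (t - m) * ∑ i ∈ s, (if y i ≤ m then (1 : ℝ) else -1) :=
        le_add_of_nonneg_right (mul_nonneg (by linarith) hsign)
    _ ≤ ∑ i ∈ s, |t - y i| := by
        rw [mul_sum, ← sum_add_distrib]
        exact sum_le_sum fun i _ => abs_sub_add_mul_sign_le_abs_sub hmt

-- A `r`-minimal element outside this set would have all its `r`-predecessors inside it.
theorem le_card_filter_ncard_lt {α : Type*} [Fintype α] (r : α → α → Prop) [IsTrans α r]
    [Std.Irrefl r] {k : ℕ} (hk : k ≤ Fintype.card α) :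
    k ≤ #{a | {b | r b a}.ncard < k} := by
  by_contra! hlt
  set S : Finset α := {a | {b | r b a}.ncard < k}
  have hS : ∃ a, a ∉ S := by
    by_contra! hS
    rw [(eq_univ_iff_forall (s := S)).2 (by simpa using hS), card_univ] at hlt
    omega
  obtain ⟨a, ha, hmin⟩ := (Finite.wellFounded_of_trans_of_irrefl r).has_min {a | a ∉ S} hS
  have hpred : {b | r b a} ⊆ ↑S := fun b hb => by
    by_contra hbS
    exact hmin b (by simpa using hbS) hb
  have haS : a ∈ S := by
    simp only [S, mem_filter, mem_univ, true_and]
    exact (Set.ncard_le_ncard hpred).trans_lt (by rwa [Set.ncard_coe_finset])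
  exact ha haS

theorem card_filter_eq_countP_sort {ι α : Type*} [Fintype ι] [LinearOrder α] (x : ι → α)
    (p : α → Prop) [DecidablePred p] :
    #{i | p (x i)} = ((univ.val.map x).sort (· ≤ ·)).countP p := by
  rw [← Multiset.coe_countP, Multiset.sort_eq, Multiset.countP_map]
  rfl

theorem le_two_mul_card_le_medianMech {n : ℕ} (x : Fin n → I) :
    n ≤ 2 * #{i | x i ≤ medianMech n x} ∧ n ≤ 2 * #{i | medianMech n x ≤ x i} := by
  rcases Nat.eq_zero_or_pos n with rfl | hn
  · simp
  rw [card_filter_eq_countP_sort x (· ≤ medianMech n x),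
    card_filter_eq_countP_sort x (medianMech n x ≤ ·)]
  set l := (univ.val.map x).sort (· ≤ ·)
  have hsorted : l.Pairwise (· ≤ ·) := Multiset.pairwise_sort _ _
  have hlen : l.length = n := by simp [l]
  have hidx : (n + 1) / 2 - 1 < l.length := by omega
  have hmed : medianMech n x = l[(n + 1) / 2 - 1] := List.getD_eq_getElem _ _ hidx
  rw [hmed]
  have h₁ := hsorted.succ_le_countP_le_getElem hidx
  have h₂ := hsorted.length_sub_le_countP_getElem_le hidx
  omega

theorem unitInterval.abs_sub_le_one (a b : I) : |(a : ℝ) - b| ≤ 1 :=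
  abs_sub_le_of_nonneg_of_le a.2.1 a.2.2 b.2.1 b.2.2

section Welfare

variable {n : ℕ} (x : Fin n → I) {k : ℕ}

instance (s : I) : IsTrans (Fin n) (prio x s) where
  trans _ _ _ := by
    rintro (h₁ | ⟨e₁, l₁⟩) (h₂ | ⟨e₂, l₂⟩)
    · exact Or.inl (h₁.trans h₂)
    · exact Or.inl (e₂ ▸ h₁)
    · exact Or.inl (e₁ ▸ h₂)
    · exact Or.inr ⟨e₁.trans e₂, l₁.trans l₂⟩

instance (s : I) : Std.Irrefl (prio x s) where
  irrefl _ := by rintro (h | ⟨-, h⟩) <;> exact lt_irrefl _ h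

theorem le_card_served (s : I) (hk : k ≤ n) : k ≤ #{i | served x s k i} := by
  convert le_card_filter_ncard_lt (prio x s) (by simpa using hk); exact Iff.rfl

theorem util_le_one_sub_abs (s : I) (i : Fin n) : util x s k i ≤ 1 - |(s : ℝ) - x i| := by
  unfold util
  split_ifs
  · exact le_rfl
  · linarith [unitInterval.abs_sub_le_one s (x i)]

theorem welfare_le_sum_one_sub_abs (s : I) : welfare x k s ≤ ∑ i, (1 - |(s : ℝ) - x i|) :=
  sum_le_sum fun i _ => util_le_one_sub_abs x s i

theorem sum_one_sub_abs_sub_welfare_le (hk : k ≤ n) (s : I) :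
    ∑ i, (1 - |(s : ℝ) - x i|) - welfare x k s ≤ n - k := by
  have hpoint : ∀ i, 1 - |(s : ℝ) - x i| - util x s k i ≤ if served x s k i then 0 else 1 := by
    intro i
    unfold util
    split_ifs
    · simp
    · linarith [abs_nonneg ((s : ℝ) - x i)]
  have hcard := card_filter_add_card_filter_not (s := univ) (served x s k)
  have hserved : (k : ℝ) ≤ #{i | served x s k i} := by exact_mod_cast le_card_served x s hk
  calc ∑ i, (1 - |(s : ℝ) - x i|) - welfare x k s
      ≤ ∑ i, (if served x s k i then (0 : ℝ) else 1) := by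
        rw [welfare, ← sum_sub_distrib]
        exact sum_le_sum fun i _ => hpoint i
    _ = #{i | ¬served x s k i} := by simp [sum_ite]
    _ ≤ n - k := by
        rw [card_univ, Fintype.card_fin] at hcard
        have : (#{i | served x s k i} : ℝ) + #{i | ¬served x s k i} = n := by exact_mod_cast hcard
        linarith

theorem bddAbove_range_welfare : BddAbove (Set.range (welfare x k)) := by
  refine ⟨n, ?_⟩
  rintro _ ⟨s, rfl⟩
  calc welfare x k s ≤ ∑ i, (1 - |(s : ℝ) - x i|) := welfare_le_sum_one_sub_abs x s
    _ ≤ ∑ _i : Fin n, (1 : ℝ) := sum_le_sum fun i _ => by linarith [abs_nonneg ((s : ℝ) - x i)]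
    _ = n := by simp

theorem div_two_le_optWelfare (hk : k ≤ n) : (k : ℝ) / 2 ≤ optWelfare x k := by
  let half : I := ⟨1 / 2, by norm_num, by norm_num⟩
  have hpoint : ∀ i, (if served x half k i then (1 / 2 : ℝ) else 0) ≤ util x half k i := by
    intro i
    unfold util
    split_ifs
    · have : |(1 / 2 : ℝ) - x i| ≤ 1 / 2 :=
        abs_le.2 ⟨by linarith [unitInterval.le_one (x i)], by linarith [unitInterval.nonneg (x i)]⟩
      change 1 / 2 ≤ 1 - |1 / 2 - (x i : ℝ)|
      linarith
    · exact le_rfl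
  have hserved : (k : ℝ) ≤ #{i | served x half k i} := by
    exact_mod_cast le_card_served x half hk
  calc (k : ℝ) / 2 ≤ #{i | served x half k i} / 2 := by linarith
    _ = ∑ i, (if served x half k i then (1 / 2 : ℝ) else 0) := by
        rw [sum_ite, sum_const, sum_const_zero]; simp [div_eq_mul_inv]
    _ ≤ welfare x k half := sum_le_sum fun i _ => hpoint i
    _ ≤ optWelfare x k := le_ciSup (bddAbove_range_welfare x) half

theorem sum_one_sub_abs_le_medianMech (s : I) :
    ∑ i, (1 - |(s : ℝ) - x i|) ≤ ∑ i, (1 - |(medianMech n x : ℝ) - x i|) := by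
  obtain ⟨hl, hr⟩ := le_two_mul_card_le_medianMech x
  simp only [sum_sub_distrib, sub_le_sub_iff_left]
  exact sum_abs_sub_le_of_le_two_mul_card univ (fun i => (x i : ℝ)) (by simpa using hl)
    (by simpa using hr) s

theorem optWelfare_le_welfare_medianMech_add (hk : k ≤ n) :
    optWelfare x k ≤ welfare x k (medianMech n x) + (n - k) :=
  ciSup_le fun s => by
    linarith [welfare_le_sum_one_sub_abs x (k := k) s, sum_one_sub_abs_le_medianMech x s,
      sum_one_sub_abs_sub_welfare_le x hk (medianMech n x)]

end Welfare

theorem le_one_add_two_mul_div_mul_of_le_add {P W D c : ℝ} (hD : 0 ≤ D) (hc : 0 < c)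
    (hW : c ≤ 2 * W) (hP : P ≤ W + D) : P ≤ (1 + 2 * D / c) * W := by
  have : D ≤ 2 * D / c * W := by
    rw [div_mul_eq_mul_div, le_div_iff₀ hc]
    nlinarith
  linarith

theorem median_welfare_large_k_general (n k : ℕ) (hk : k ≤ n) :
    (∀ x : Fin n → I,
      optWelfare x k - ((n : ℝ) + 1 - (k : ℝ)) ≤ welfare x k (medianMech n x)) ∧
    (∀ x : Fin n → I, (k : ℝ) / 2 ≤ optWelfare x k) ∧
    ((0 : ℝ) < 3 * (k : ℝ) - 2 * (n : ℝ) - 2 →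
      ∀ x : Fin n → I,
        optWelfare x k ≤
          (1 + 2 * ((n : ℝ) + 1 - (k : ℝ)) / (3 * (k : ℝ) - 2 * (n : ℝ) - 2)) *
            welfare x k (medianMech n x)) := by
  have hkn : (k : ℝ) ≤ n := by exact_mod_cast hk
  have hopt x := optWelfare_le_welfare_medianMech_add x hk
  have hhalf x := div_two_le_optWelfare x hk
  refine ⟨fun x => by linarith [hopt x], hhalf, fun hc x => ?_⟩
  exact le_one_add_two_mul_div_mul_of_le_add (by linarith) hc
    (by linarith [hopt x, hhalf x]) (by linarith [hopt x])

theorem median_welfare_large_k (n k : ℕ) (hn : 5 ≤ n) (hk : k ≤ n)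
    (hk2 : (n + 1) / 2 < k)  -- i.e. `k > ⌊(n+1)/2⌋`
    :
    (∀ x : Fin n → I,
      optWelfare x k - ((n : ℝ) + 1 - (k : ℝ)) ≤ welfare x k (medianMech n x)) ∧
    (∀ x : Fin n → I, (k : ℝ) / 2 ≤ optWelfare x k) ∧
    ((0 : ℝ) < 3 * (k : ℝ) - 2 * (n : ℝ) - 2 →
      ∀ x : Fin n → I,
        optWelfare x k ≤
          (1 + 2 * ((n : ℝ) + 1 - (k : ℝ)) / (3 * (k : ℝ) - 2 * (n : ℝ) - 2)) *
            welfare x k (medianMech n x)) :=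
  median_welfare_large_k_general n k hk
end
end

section
/- For capacity k < n (n ≥ 2), no location-allocation mechanism that is allocation-anonymous is DIC: there always exist an agent, a true profile, and a misreport giving the agent strictly higher utility. -/
/-!
At the profile where everybody reports `1/2`, some agent `i` is left out, since `k < n`.
Truthful `i` then gets `0`, while being served anywhere in `[0,1]` would give it at least `1/2`;
so DIC forbids serving `i` after any unilateral deviation of `i`. By anonymity, no agent `j` who
alone deviates from `1/2` is served either. Now take an agent `j` served at the all-`1/2` profile,
at facility `s`. A truthful `j` located at `0` (resp. `1`) is not served, so DIC forces the
deviation to `1/2` to be worthless for it: `1 - s ≤ 0` and `s ≤ 0`, which is absurd.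
-/

open scoped Classical
open unitInterval

noncomputable section

/-- Utility under a location-allocation outcome `(s, A)`: agent `i` gets `1 - |s - x_i|`
if `i` is allocated to the facility, and `0` otherwise. -/
def uA {n : ℕ} (x : Fin n → I) (p : I × Finset (Fin n)) (i : Fin n) : ℝ :=
  if i ∈ p.2 then 1 - |(p.1 : ℝ) - x i| else 0

open Function

namespace unitInterval

def half : I := ⟨1 / 2, by norm_num, by norm_num⟩

@[simp]
theorem coe_half : ((half : I) : ℝ) = 1 / 2 := rfl

theorem abs_sub_half_le (s : I) : |(s : ℝ) - half| ≤ 1 / 2 := by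
  rw [coe_half, abs_sub_le_iff]
  constructor <;> linarith [s.2.1, s.2.2]

theorem abs_add_abs_sub_one (s : I) : |(s : ℝ)| + |(s : ℝ) - 1| = 1 := by
  rw [abs_of_nonneg s.2.1, abs_of_nonpos (by linarith [s.2.2])]
  ring

end unitInterval

theorem Function.update_const_comp_swap {α β : Type*} [DecidableEq α] (c a : β) (i j : α) :
    update (fun _ => c) i a ∘ Equiv.swap i j = update (fun _ => c) j a := by
  rw [update_comp_equiv, Equiv.symm_swap, Equiv.swap_apply_left]
  rfl

section LocationAllocation

variable {n : ℕ} (M : (Fin n → I) → I × Finset (Fin n))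

def IsDICAlloc : Prop :=
  ∀ (i : Fin n) (x y : Fin n → I) (x' : I),
    uA x (M (update y i x')) i ≤ uA x (M (update y i (x i))) i

def IsAllocAnonymous : Prop :=
  ∀ (i j : Fin n), i ≠ j → ∀ x : Fin n → I,
    (∀ l, l ≠ i → x i ≠ x l) → (i ∈ (M x).2 ↔ j ∈ (M (x ∘ Equiv.swap i j)).2)

variable {M}

theorem IsDICAlloc.one_le_abs_sub {i : Fin n} {y : Fin n → I} {x' : I} (hM : IsDICAlloc M)
    (hy : i ∉ (M y).2) (hx' : i ∈ (M (update y i x')).2) :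
    1 ≤ |((M (update y i x')).1 : ℝ) - y i| := by
  have h := hM i y y x'
  rw [update_eq_self, uA, if_pos hx', uA, if_neg hy] at h
  linarith

theorem IsDICAlloc.notMem_update_of_notMem {i : Fin n} {y : Fin n → I} (hM : IsDICAlloc M)
    (hyi : y i = half) (hy : i ∉ (M y).2) (a : I) : i ∉ (M (update y i a)).2 := fun hmem => by
  have h := hM.one_le_abs_sub hy hmem
  rw [hyi] at h
  linarith [abs_sub_half_le (M (update y i a)).1]

theorem IsDICAlloc.notMem_of_notMem_update_zero_one {j : Fin n} {y : Fin n → I}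
    (hM : IsDICAlloc M) (h0 : j ∉ (M (update y j 0)).2) (h1 : j ∉ (M (update y j 1)).2) :
    j ∉ (M y).2 := fun hj => by
  have hback : ∀ a : I, update (update y j a) j (y j) = y := fun a => by
    rw [update_idem, update_eq_self]
  have d0 := hM.one_le_abs_sub h0 (x' := y j) (by rwa [hback])
  have d1 := hM.one_le_abs_sub h1 (x' := y j) (by rwa [hback])
  rw [hback, update_self, Set.Icc.coe_zero, sub_zero] at d0
  rw [hback, update_self, Set.Icc.coe_one] at d1
  linarith [abs_add_abs_sub_one (M y).1]

theorem IsAllocAnonymous.mem_update_const_iff (hM : IsAllocAnonymous M) {i j : Fin n}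
    (hij : i ≠ j) {c a : I} (hac : a ≠ c) :
    i ∈ (M (update (fun _ => c) i a)).2 ↔ j ∈ (M (update (fun _ => c) j a)).2 := by
  rw [← update_const_comp_swap c a i j]
  refine hM i j hij _ fun l hl => ?_
  rwa [update_self, update_of_ne hl]

theorem IsDICAlloc.notMem_update_half_of_notMem (hD : IsDICAlloc M) (hA : IsAllocAnonymous M)
    {i : Fin n} (hi : i ∉ (M fun _ => half).2) (j : Fin n) (a : I) (ha : a ≠ half) :
    j ∉ (M (update (fun _ => half) j a)).2 := by
  rcases eq_or_ne i j with rfl | hij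
  · exact hD.notMem_update_of_notMem rfl hi a
  · exact (hA.mem_update_const_iff hij ha).not.mp (hD.notMem_update_of_notMem rfl hi a)

end LocationAllocation

theorem no_anonymous_DIC_location_allocation_general (n k : ℕ) (hkn : k < n)
    (M : (Fin n → I) → I × Finset (Fin n))
    (hcard : ∀ x, 0 < (M x).2.card ∧ (M x).2.card ≤ k)
    (hanon : ∀ (i j : Fin n), i ≠ j → ∀ x : Fin n → I,
      (∀ l, l ≠ i → x i ≠ x l) →
      (i ∈ (M x).2 ↔ j ∈ (M (x ∘ Equiv.swap i j)).2)) :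
    ¬ (∀ (i : Fin n) (x y : Fin n → I) (x' : I),
        uA x (M (Function.update y i x')) i ≤ uA x (M (Function.update y i (x i))) i) := by
  intro hDIC
  change IsDICAlloc M at hDIC
  obtain ⟨i, -, hi⟩ := Finset.exists_mem_notMem_of_card_lt_card (s := (M fun _ => half).2)
    (t := Finset.univ) (by simpa using (hcard _).2.trans_lt hkn)
  obtain ⟨j, hj⟩ := Finset.card_pos.mp (hcard fun _ => half).1
  have hout := hDIC.notMem_update_half_of_notMem hanon hi j
  refine hDIC.notMem_of_notMem_update_zero_one (hout 0 ?_) (hout 1 ?_) hj <;>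
    simp [Subtype.ext_iff]

theorem no_anonymous_DIC_location_allocation (n k : ℕ) (hk1 : 1 ≤ k) (hkn : k < n)
    (M : (Fin n → I) → I × Finset (Fin n))
    (hcard : ∀ x, 0 < (M x).2.card ∧ (M x).2.card ≤ k)
    (hanon : ∀ (i j : Fin n), i ≠ j → ∀ x : Fin n → I,
      (∀ l, l ≠ i → x i ≠ x l) →
      (i ∈ (M x).2 ↔ j ∈ (M (x ∘ Equiv.swap i j)).2)) :
    ¬ (∀ (i : Fin n) (x y : Fin n → I) (x' : I),
        uA x (M (Function.update y i x')) i ≤ uA x (M (Function.update y i (x i))) i) :=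
  no_anonymous_DIC_location_allocation_general n k hkn M hcard hanon
end
end
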